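/- Let G be an infinite, connected, locally finite simple graph with exactly one end. Let ~ be an equivalence relation on the vertex set of G such that every equivalence class is finite and induces a connected subgraph of G. Let Q be a set of edges of G such that every edge in Q joins two ~-equivalent vertices, and such that every equivalence class still induces a connected subgraph of the graph G \ Q obtained from G by deleting the edges in Q. Then G \ Q is connected and has exactly one end. -/

import Mathlib

open SimpleGraph

/-!
Every edge of `G` becomes, after deleting `Q`, a path inside one `~`-class. Hence `G \ Q` is
connected, and a walk of `G` avoiding the `~`-saturation `L` of a finite set `K` turns into a
walk of `G \ Q` avoiding `K`. So the components of `G \ Q` outside `L` map to components of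
`G` outside `L` and this map remembers which component of `G \ Q` outside `K` they lie in;
two ends of `G \ Q` with the same image in the unique end of `G` therefore agree on every `K`.
Nonemptiness of the end space is König's lemma for the locally finite graph `G \ Q`.
-/

namespace SimpleGraph

variable {V W : Type*}

theorem Reachable.of_forall_adj {G : SimpleGraph V} {H : SimpleGraph W} (f : V → W)
    (h : ∀ ⦃a b⦄, G.Adj a b → H.Reachable (f a) (f b)) {u v : V} (huv : G.Reachable u v) :
    H.Reachable (f u) (f v) := by
  obtain ⟨p⟩ := huv
  induction p with
  | nil => rfl
  | cons hadj _ ih => exact (h hadj).trans ih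

theorem end_nonempty_of_neighborSet_finite [Infinite V] (G : SimpleGraph V)
    (hG : G.Preconnected) (hlf : ∀ v, (G.neighborSet v).Finite) : G.end.Nonempty := by
  have : LocallyFinite G := fun v => (hlf v).fintype
  have : Fact G.Preconnected := ⟨hG⟩
  have : ∀ K : (Finset V)ᵒᵖ, Finite (G.componentComplFunctor.obj K) :=
    fun K => G.componentCompl_finite K.unop
  have : ∀ K : (Finset V)ᵒᵖ, Nonempty (G.componentComplFunctor.obj K) :=
    fun K => G.componentCompl_nonempty_of_infinite K.unop
  exact nonempty_sections_of_finite_inverse_system G.componentComplFunctor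

namespace ComponentCompl

variable {H G : SimpleGraph V} (hHG : H ≤ G)

def ofLE {K : Set V} : H.ComponentCompl K → G.ComponentCompl K :=
  ConnectedComponent.map (induceHom (Hom.ofLE hHG) fun _ hx => hx)

@[simp]
theorem ofLE_mk {K : Set V} {v : V} (hv : v ∉ K) :
    ofLE hHG (H.componentComplMk hv) = G.componentComplMk hv :=
  rfl

theorem ofLE_hom {K L : Set V} (hKL : K ⊆ L) (C : H.ComponentCompl L) :
    (ofLE hHG C).hom hKL = ofLE hHG (C.hom hKL) := by
  induction C using ComponentCompl.ind with
  | _ hv => simp only [ofLE_mk, hom_mk]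

theorem ofLE_mem_end {e : ∀ K, H.componentComplFunctor.obj K} (he : e ∈ H.end) :
    (fun K => ofLE hHG (e K) : ∀ K, G.componentComplFunctor.obj K) ∈ G.end := by
  intro K L f
  exact (ofLE_hom hHG (CategoryTheory.le_of_op_hom f) (e K)).trans (congrArg (ofLE hHG) (he f))

end ComponentCompl

open ComponentCompl in
theorem end_subsingleton_of_le {H G : SimpleGraph V} (hHG : H ≤ G) (hG : G.end.Subsingleton)
    (hfactor : ∀ K : Finset V, ∃ L : Finset V, ∃ hKL : K ⊆ L, ∀ C D : H.ComponentCompl L,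
      ofLE hHG C = ofLE hHG D → C.hom hKL = D.hom hKL) :
    H.end.Subsingleton := by
  intro e₁ he₁ e₂ he₂
  funext K
  obtain ⟨L, hKL, hL⟩ := hfactor K.unop
  have himage := congrFun (hG (ofLE_mem_end hHG he₁) (ofLE_mem_end hHG he₂)) (Opposite.op L)
  rw [← he₁ (CategoryTheory.opHomOfLE hKL), ← he₂ (CategoryTheory.opHomOfLE hKL)]
  exact hL _ _ himage

end SimpleGraph

theorem Setoid.exists_superset_forall_rel_notMem {V : Type*} {s : Setoid V}
    (hfin : ∀ x : V, {y | s.r x y}.Finite) (K : Finset V) :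
    ∃ L : Finset V, K ⊆ L ∧ ∀ a ∉ L, ∀ y, s.r a y → y ∉ K := by
  have hsat : (⋃ x ∈ K, {y | s.r x y}).Finite := K.finite_toSet.biUnion fun x _ => hfin x
  refine ⟨hsat.toFinset, fun x hx => ?_, fun a ha y hay hy => ha ?_⟩
  · simpa using ⟨x, hx, s.refl x⟩
  · simpa using ⟨y, hy, s.symm hay⟩

namespace SimpleGraph

variable {V : Type*} (G : SimpleGraph V) {s : Setoid V} {Q : Set (Sym2 V)}
  (hQrel : ∀ x y : V, s(x, y) ∈ Q → s.r x y)
  (hclass' : ∀ x : V, ((G.deleteEdges Q).induce {y | s.r x y}).Connected)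
include hQrel hclass'

theorem connected_deleteEdges_of_connected_classes (hconn : G.Connected) :
    (G.deleteEdges Q).Connected := by
  have := hconn.nonempty
  refine ⟨fun u v => (hconn.preconnected u v).of_forall_adj id fun a b hab => ?_⟩
  by_cases hq : s(a, b) ∈ Q
  · exact ((hclass' a).preconnected ⟨a, s.refl a⟩ ⟨b, hQrel a b hq⟩).map
      (Embedding.induce _).toHom
  · exact (deleteEdges_adj.mpr ⟨hab, hq⟩).reachable

theorem Reachable.deleteEdges_induce_of_induce {S T : Set V} (hTS : T ⊆ S)
    (hsat : ∀ a ∈ T, ∀ y, s.r a y → y ∈ S) {x y : T} (hxy : (G.induce T).Reachable x y) :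
    ((G.deleteEdges Q).induce S).Reachable (Set.inclusion hTS x) (Set.inclusion hTS y) := by
  refine hxy.of_forall_adj (Set.inclusion hTS) fun a b hab => ?_
  by_cases hq : s(a.1, b.1) ∈ Q
  · exact ((hclass' a).preconnected ⟨a, s.refl a⟩ ⟨b, hQrel a b hq⟩).map
      (induceHom Hom.id fun z hz => hsat a a.2 z hz)
  · exact Adj.reachable (G := (G.deleteEdges Q).induce S) (deleteEdges_adj.mpr ⟨hab, hq⟩)

theorem ComponentCompl.hom_eq_of_ofLE_deleteEdges_eq {K L : Finset V} (hKL : K ⊆ L)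
    (hsat : ∀ a ∉ L, ∀ y, s.r a y → y ∉ K) (C D : (G.deleteEdges Q).ComponentCompl L)
    (h : ofLE (G.deleteEdges_le Q) C = ofLE (G.deleteEdges_le Q) D) :
    C.hom hKL = D.hom hKL := by
  induction C using ComponentCompl.ind with | _ hu => ?_
  induction D using ComponentCompl.ind with | _ hv => ?_
  rw [ofLE_mk, ofLE_mk] at h
  rw [hom_mk _ hKL, hom_mk _ hKL]
  exact ConnectedComponent.eq.mpr <| Reachable.deleteEdges_induce_of_induce G hQrel hclass'
    (Set.compl_subset_compl.mpr hKL) hsat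
    (ConnectedComponent.eq.mp h)

end SimpleGraph

theorem stmt1_general {V : Type*} [Infinite V] (G : SimpleGraph V)
    (hconn : G.Connected) (hlf : ∀ v : V, (G.neighborSet v).Finite)
    (hend : G.end.Nonempty ∧ G.end.Subsingleton)
    (s : Setoid V)
    (hfin : ∀ x : V, {y | s.r x y}.Finite)
    (Q : Set (Sym2 V))
    (hQrel : ∀ x y : V, s(x, y) ∈ Q → s.r x y)
    (hclass' : ∀ x : V, ((G.deleteEdges Q).induce {y | s.r x y}).Connected) :
    (G.deleteEdges Q).Connected ∧
      (G.deleteEdges Q).end.Nonempty ∧ (G.deleteEdges Q).end.Subsingleton := by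
  have hconn' := G.connected_deleteEdges_of_connected_classes hQrel hclass' hconn
  refine ⟨hconn', ?_, ?_⟩
  · exact end_nonempty_of_neighborSet_finite _ hconn'.preconnected fun v =>
      (hlf v).subset fun _ hw => G.deleteEdges_le Q hw
  · refine end_subsingleton_of_le (G.deleteEdges_le Q) hend.2 fun K => ?_
    obtain ⟨L, hKL, hsat⟩ := Setoid.exists_superset_forall_rel_notMem hfin K
    exact ⟨L, hKL, ComponentCompl.hom_eq_of_ofLE_deleteEdges_eq G hQrel hclass' hKL hsat⟩

/-- Deleting edges of a one-ended, infinite, connected, locally finite graph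
that join equivalent vertices of a finite-class equivalence relation whose classes induce
connected subgraphs (and stay connected after the deletion) preserves connectivity and
one-endedness. -/
theorem stmt1 {V : Type*} [Infinite V] (G : SimpleGraph V)
    (hconn : G.Connected) (hlf : ∀ v : V, (G.neighborSet v).Finite)
    (hend : G.end.Nonempty ∧ G.end.Subsingleton)
    (s : Setoid V)
    (hfin : ∀ x : V, {y | s.r x y}.Finite)
    (hclass : ∀ x : V, (G.induce {y | s.r x y}).Connected)
    (Q : Set (Sym2 V)) (hQ : Q ⊆ G.edgeSet)
    (hQrel : ∀ x y : V, s(x, y) ∈ Q → s.r x y)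
    (hclass' : ∀ x : V, ((G.deleteEdges Q).induce {y | s.r x y}).Connected) :
    (G.deleteEdges Q).Connected ∧
      (G.deleteEdges Q).end.Nonempty ∧ (G.deleteEdges Q).end.Subsingleton :=
  stmt1_general G hconn hlf hend s hfin Q hQrel hclass'
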